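/- Let $K$ be a monotone kernel function, $0 < \alpha < a < b < \beta < 1$, and $p, q > 0$ with $\kappa := \frac{p(a-\alpha)}{q(\beta-b)} \le 1$. Then for every $t \in [\beta, 1]$ one has $pK(t-\alpha) + qK(t-\beta) \le pK(t-a) + qK(t-b)$. -/

import Mathlib

open Set Filter

noncomputable section

/-- A kernel function: finite and concave on `(-1,0)` and `(0,1)`, with equal one-sided
limits at `0`, extended to `[-1,1]` (values in `ℝ ∪ {-∞}`, i.e. never `⊤`) by limits. -/
def IsKernelFunction (K : ℝ → EReal) : Prop :=
  (∀ t ∈ Set.Icc (-1:ℝ) 1, K t ≠ ⊤) ∧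
  (∀ t ∈ Set.Ioo (-1:ℝ) 0, K t ≠ ⊥) ∧
  (∀ t ∈ Set.Ioo (0:ℝ) 1, K t ≠ ⊥) ∧
  ConcaveOn ℝ (Set.Ioo (-1:ℝ) 0) (fun t => (K t).toReal) ∧
  ConcaveOn ℝ (Set.Ioo (0:ℝ) 1) (fun t => (K t).toReal) ∧
  Filter.Tendsto K (nhdsWithin 0 (Set.Iio 0)) (nhds (K 0)) ∧
  Filter.Tendsto K (nhdsWithin 0 (Set.Ioi 0)) (nhds (K 0)) ∧
  Filter.Tendsto K (nhdsWithin (-1) (Set.Ioi (-1:ℝ))) (nhds (K (-1))) ∧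
  Filter.Tendsto K (nhdsWithin 1 (Set.Iio (1:ℝ))) (nhds (K 1))

/-- Monotone kernel: non-increasing on `(-1,0)`, non-decreasing on `(0,1)`. -/
def IsMonotoneKernel (K : ℝ → EReal) : Prop :=
  IsKernelFunction K ∧ AntitoneOn K (Set.Ioo (-1:ℝ) 0) ∧ MonotoneOn K (Set.Ioo (0:ℝ) 1)

/-- The closed simplex of node systems `0 ≤ y 0 ≤ ⋯ ≤ y (n-1) ≤ 1`. -/
def simplex (n : ℕ) : Set (Fin n → ℝ) :=
  {y | Monotone y ∧ ∀ i, y i ∈ Set.Icc (0:ℝ) 1}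

/-- The `j`-th node of the node system `y`, with `node y 0 = 0` and `node y (n+1) = 1`. -/
def node {n : ℕ} (y : Fin n → ℝ) (j : ℕ) : ℝ :=
  if h : 1 ≤ j ∧ j ≤ n then y ⟨j - 1, by omega⟩ else if j = 0 then 0 else 1

/-- An `n`-field function: bounded above on `[0,1]`, with values in `ℝ ∪ {-∞}`, finite
at more than `n` points of `[0,1]`, where `0` and `1` count with weight `1/2`. -/
def IsFieldFunction (n : ℕ) (J : ℝ → EReal) : Prop :=
  (∀ t ∈ Set.Icc (0:ℝ) 1, J t ≠ ⊤) ∧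
  (∃ C : ℝ, ∀ t ∈ Set.Icc (0:ℝ) 1, J t ≤ (C : EReal)) ∧
  ∃ T : Finset ℝ, ↑T ⊆ Set.Icc (0:ℝ) 1 ∧ (∀ t ∈ T, J t ≠ ⊥) ∧
    (n : ℝ) < ∑ t ∈ T, (if t = 0 ∨ t = 1 then (1/2 : ℝ) else 1)

/-- The (weighted) sum of translates function `F(y,t) = J(t) + ∑ ν_j K(t - y_j)`. -/
def Fsum {n : ℕ} (K : ℝ → EReal) (ν : Fin n → ℝ) (J : ℝ → EReal)
    (y : Fin n → ℝ) (t : ℝ) : EReal :=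
  J t + ∑ j, (ν j : EReal) * K (t - y j)

/-- The `j`-th interval maximum `m_j(y) = sup_{t ∈ [y_j, y_{j+1}]} F(y,t)`. -/
def mj {n : ℕ} (K : ℝ → EReal) (ν : Fin n → ℝ) (J : ℝ → EReal)
    (y : Fin n → ℝ) (j : ℕ) : EReal :=
  sSup (Fsum K ν J y '' Set.Icc (node y j) (node y (j + 1)))

/-- The regularity set `Y`: node systems with all interval maxima `> -∞`. -/
def regularitySet {n : ℕ} (K : ℝ → EReal) (ν : Fin n → ℝ) (J : ℝ → EReal) :
    Set (Fin n → ℝ) :=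
  {y ∈ simplex n | ∀ j ≤ n, mj K ν J y j ≠ ⊥}

/-- Upper semicontinuous regularization of a function on `[0,1]`. -/
def uscReg (φ : ℝ → EReal) (t : ℝ) : EReal :=
  ⨅ (r : ℝ) (_ : 0 < r), sSup (φ '' (Set.Ioo (t - r) (t + r) ∩ Set.Icc 0 1))

/-- Upper semicontinuous regularization computed within a subset `A` of `[0,1]`. -/
def uscRegOn (A : Set ℝ) (φ : ℝ → EReal) (t : ℝ) : EReal :=
  ⨅ (r : ℝ) (_ : 0 < r), sSup (φ '' (Set.Ioo (t - r) (t + r) ∩ A))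

/-!
Put `x₁ = t - β < x₂ = t - b < x₃ = t - a < x₄ = t - α` and `f = K` on `[x₁, 1)`. Concavity makes
the slope of `f` on `[x₃, x₄]` (a gap of length `a - α`) at most its slope on `[x₁, x₂]` (a gap of
length `β - b`), and monotonicity makes the rise `f x₂ - f x₁` nonnegative, so
`p (f x₄ - f x₃) ≤ κ q (f x₂ - f x₁) ≤ q (f x₂ - f x₁)`. At `t = β` the point `x₁ = 0` lies on the
boundary; there `K 0` is either `-∞`, which makes the inequality trivial, or the right limit of
`K`, and concavity and monotonicity pass to the limit.
-/

open Topology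

section ConcaveSlopes

variable {s : Set ℝ} {f : ℝ → ℝ}

theorem ConcaveOn.slope_le_slope (hf : ConcaveOn ℝ s f) {x₁ x₂ x₃ x₄ : ℝ}
    (h₁ : x₁ ∈ s) (h₄ : x₄ ∈ s) (h₁₂ : x₁ < x₂) (h₂₃ : x₂ < x₃) (h₃₄ : x₃ < x₄) :
    (f x₄ - f x₃) / (x₄ - x₃) ≤ (f x₂ - f x₁) / (x₂ - x₁) :=
  have h₂ : x₂ ∈ s := hf.1.ordConnected.out h₁ h₄ ⟨h₁₂.le, (h₂₃.trans h₃₄).le⟩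
  have h₃ : x₃ ∈ s := hf.1.ordConnected.out h₁ h₄ ⟨(h₁₂.trans h₂₃).le, h₃₄.le⟩
  (hf.slope_anti_adjacent h₂ h₄ h₂₃ h₃₄).trans (hf.slope_anti_adjacent h₁ h₃ h₁₂ h₂₃)

theorem ConcaveOn.mul_add_mul_le (hf : ConcaveOn ℝ s f) (hmono : MonotoneOn f s)
    {p q x₁ x₂ x₃ x₄ : ℝ} (hp : 0 ≤ p) (h₁ : x₁ ∈ s) (h₄ : x₄ ∈ s)
    (h₁₂ : x₁ < x₂) (h₂₃ : x₂ < x₃) (h₃₄ : x₃ < x₄) (hpq : p * (x₄ - x₃) ≤ q * (x₂ - x₁)) :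
    p * f x₄ + q * f x₁ ≤ p * f x₃ + q * f x₂ := by
  have h₂ : x₂ ∈ s := hf.1.ordConnected.out h₁ h₄ ⟨h₁₂.le, (h₂₃.trans h₃₄).le⟩
  have hslope := hf.slope_le_slope h₁ h₄ h₁₂ h₂₃ h₃₄
  rw [div_le_div_iff₀ (sub_pos.2 h₃₄) (sub_pos.2 h₁₂)] at hslope
  have hrise : 0 ≤ f x₂ - f x₁ := sub_nonneg.2 (hmono h₁ h₂ h₁₂.le)
  have key : (p * (f x₄ - f x₃)) * (x₂ - x₁) ≤ (q * (f x₂ - f x₁)) * (x₂ - x₁) :=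
    calc (p * (f x₄ - f x₃)) * (x₂ - x₁) = p * ((f x₄ - f x₃) * (x₂ - x₁)) := by ring
      _ ≤ p * ((f x₂ - f x₁) * (x₄ - x₃)) := mul_le_mul_of_nonneg_left hslope hp
      _ = (p * (x₄ - x₃)) * (f x₂ - f x₁) := by ring
      _ ≤ (q * (x₂ - x₁)) * (f x₂ - f x₁) := mul_le_mul_of_nonneg_right hpq hrise
      _ = (q * (f x₂ - f x₁)) * (x₂ - x₁) := by ring
  linarith [le_of_mul_le_mul_right key (sub_pos.2 h₁₂)]

theorem ConcaveOn.concaveOn_Ico {a b : ℝ} (hf : ConcaveOn ℝ (Ioo a b) f)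
    (ha : ContinuousWithinAt f (Ioi a) a) : ConcaveOn ℝ (Ico a b) f := by
  refine concaveOn_of_slope_anti_adjacent (convex_Ico a b) fun {x y z} hx hz hxy hyz => ?_
  rcases hx.1.eq_or_lt with rfl | hax
  · have hlim : Tendsto (fun u => (f y - f u) / (y - u)) (𝓝[>] a)
        (𝓝 ((f y - f a) / (y - a))) :=
      (tendsto_const_nhds.sub ha).div (tendsto_const_nhds.sub nhdsWithin_le_nhds)
        (sub_pos.2 hxy).ne'
    refine ge_of_tendsto hlim ?_
    filter_upwards [Ioo_mem_nhdsGT hxy] with u hu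
    exact hf.slope_anti_adjacent ⟨hu.1, hu.2.trans (hyz.trans hz.2)⟩
      ⟨hxy.trans hyz, hz.2⟩ hu.2 hyz
  · exact hf.slope_anti_adjacent ⟨hax, (hxy.trans hyz).trans hz.2⟩
      ⟨(hax.trans hxy).trans hyz, hz.2⟩ hxy hyz

end ConcaveSlopes

theorem MonotoneOn.monotoneOn_Ico {β : Type*} [Preorder β] [TopologicalSpace β]
    [OrderClosedTopology β] {g : ℝ → β} {a b : ℝ} (hg : MonotoneOn g (Ioo a b))
    (ha : ContinuousWithinAt g (Ioi a) a) : MonotoneOn g (Ico a b) := by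
  intro x hx y hy hxy
  rcases hx.1.eq_or_lt with rfl | hax
  · rcases hxy.eq_or_lt with rfl | hxy
    · exact le_rfl
    refine le_of_tendsto ha ?_
    filter_upwards [Ioo_mem_nhdsGT hxy] with u hu
    exact hg ⟨hu.1, hu.2.trans hy.2⟩ ⟨hxy, hy.2⟩ hu.2.le
  · exact hg ⟨hax, hx.2⟩ ⟨hax.trans_le hxy, hy.2⟩ hxy

namespace IsKernelFunction

variable {K : ℝ → EReal}

theorem ne_bot_of_mem_Ico (hK : IsKernelFunction K) {x₁ x : ℝ} (hx₁ : 0 ≤ x₁)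
    (hbot : K x₁ ≠ ⊥) (hx : x ∈ Ico x₁ 1) : K x ≠ ⊥ := by
  rcases hx.1.eq_or_lt with rfl | hlt
  · exact hbot
  · exact hK.2.2.1 x ⟨hx₁.trans_lt hlt, hx.2⟩

theorem concaveOn_Ico (hK : IsKernelFunction K) {x₁ : ℝ} (hx₁ : 0 ≤ x₁) (hbot : K x₁ ≠ ⊥) :
    ConcaveOn ℝ (Ico x₁ 1) (fun x => (K x).toReal) := by
  rcases hx₁.eq_or_lt with rfl | hpos
  · have htop : K 0 ≠ ⊤ := hK.1 0 ⟨by norm_num, by norm_num⟩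
    exact hK.2.2.2.2.1.concaveOn_Ico ((EReal.tendsto_toReal htop hbot).comp hK.2.2.2.2.2.2.1)
  · exact hK.2.2.2.2.1.subset (Ico_subset_Ioo_left hpos) (convex_Ico x₁ 1)

end IsKernelFunction

namespace IsMonotoneKernel

variable {K : ℝ → EReal}

theorem monotoneOn_toReal_Ico (hK : IsMonotoneKernel K) {x₁ : ℝ} (hx₁ : 0 ≤ x₁)
    (hbot : K x₁ ≠ ⊥) : MonotoneOn (fun x => (K x).toReal) (Ico x₁ 1) := by
  have hmono : MonotoneOn K (Ico 0 1) := hK.2.2.monotoneOn_Ico hK.1.2.2.2.2.2.2.1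
  intro x hx y hy hxy
  exact EReal.toReal_le_toReal
    (hmono ⟨hx₁.trans hx.1, hx.2⟩ ⟨hx₁.trans hy.1, hy.2⟩ hxy)
    (hK.1.ne_bot_of_mem_Ico hx₁ hbot hx) (hK.1.1 y ⟨by linarith [hy.1], hy.2.le⟩)

theorem mul_add_mul_le (hK : IsMonotoneKernel K) {p q x₁ x₂ x₃ x₄ : ℝ} (hp : 0 ≤ p)
    (hq : 0 < q) (hx₁ : 0 ≤ x₁) (hx₄ : x₄ < 1) (h₁₂ : x₁ < x₂) (h₂₃ : x₂ < x₃) (h₃₄ : x₃ < x₄)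
    (hpq : p * (x₄ - x₃) ≤ q * (x₂ - x₁)) :
    (p : EReal) * K x₄ + q * K x₁ ≤ p * K x₃ + q * K x₂ := by
  by_cases hbot : K x₁ = ⊥
  · rw [hbot, EReal.coe_mul_bot_of_pos hq, EReal.add_bot]
    exact bot_le
  have hcoe : ∀ x ∈ Ico x₁ 1, K x = ((K x).toReal : EReal) := fun x hx =>
    (EReal.coe_toReal (hK.1.1 x ⟨by linarith [hx.1], hx.2.le⟩)
      (hK.1.ne_bot_of_mem_Ico hx₁ hbot hx)).symm
  have h₁ : x₁ ∈ Ico x₁ 1 := ⟨le_rfl, by linarith⟩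
  have h₄ : x₄ ∈ Ico x₁ 1 := ⟨by linarith, hx₄⟩
  rw [hcoe x₁ h₁, hcoe x₂ ⟨h₁₂.le, by linarith⟩, hcoe x₃ ⟨by linarith, by linarith⟩, hcoe x₄ h₄]
  exact_mod_cast (hK.1.concaveOn_Ico hx₁ hbot).mul_add_mul_le
    (hK.monotoneOn_toReal_Ico hx₁ hbot) hp h₁ h₄ h₁₂ h₂₃ h₃₄ hpq

end IsMonotoneKernel

theorem interval_perturbation_b_general (K : ℝ → EReal) (hK : IsMonotoneKernel K)
    (α a b β p q : ℝ)
    (h1 : 0 < α) (h2 : α < a) (h3 : a < b) (h4 : b < β)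
    (hp : 0 < p) (hq : 0 < q)
    (hκ : p * (a - α) / (q * (β - b)) ≤ 1) :
    ∀ t ∈ Set.Icc β (1:ℝ),
      (p : EReal) * K (t - α) + (q : EReal) * K (t - β)
        ≤ (p : EReal) * K (t - a) + (q : EReal) * K (t - b) := by
  intro t ht
  have hpq : p * (a - α) ≤ q * (β - b) :=
    (div_le_one (mul_pos hq (sub_pos.2 h4))).1 hκ
  exact hK.mul_add_mul_le hp.le hq (by linarith [ht.1]) (by linarith [ht.2])
    (by linarith) (by linarith) (by linarith)
    (by convert hpq using 2 <;> ring)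

/-- Interval perturbation lemma, part (b): for a monotone kernel and `κ ≤ 1`,
the inequality holds on `[β,1]`. -/
theorem interval_perturbation_b (K : ℝ → EReal) (hK : IsMonotoneKernel K)
    (α a b β p q : ℝ)
    (h1 : 0 < α) (h2 : α < a) (h3 : a < b) (h4 : b < β) (h5 : β < 1)
    (hp : 0 < p) (hq : 0 < q)
    (hκ : p * (a - α) / (q * (β - b)) ≤ 1) :
    ∀ t ∈ Set.Icc β (1:ℝ),
      (p : EReal) * K (t - α) + (q : EReal) * K (t - β)
        ≤ (p : EReal) * K (t - a) + (q : EReal) * K (t - b) :=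
  interval_perturbation_b_general K hK α a b β p q h1 h2 h3 h4 hp hq hκ
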